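/- arXiv:2303.06443 — 2 statements merged into one kernel-verified Lean document; each statement's English description precedes it below -/
import Mathlib

section
/- Let 𝐏 := P − i M_χ. If u ∈ L², ω ∈ ℂ with Im ω ≥ 0, and 𝐏u = ωu, then (χ + Im ω)·u = 0 almost everywhere and Pu = (Re ω)u. (This is the main computation in the proof of Lemma 3.1 of the paper: 0 = Im⟨(𝐏 − ω)u, u⟩ = −∫ (χ + Im ω)|u|² dμ forces (χ + Im ω)u = 0, hence (P − Re ω)u = 0.) -/
open MeasureTheory

/-!
Pairing `𝐏u = ωu` with `u` and taking imaginary parts, the self-adjoint part drops out and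
`Re⟪u, χu⟫ + Im ω ‖u‖² = ∫ (χ + Im ω) |u|² dμ = 0`. The integrand is nonnegative, so it vanishes
a.e., which means `(χ + Im ω) u = 0` a.e.; then `M_χ u = -(Im ω) u` and the eigenvalue equation
reduces to `Pu = (Re ω) u`.
-/

open scoped InnerProductSpace

section Hilbert

variable {H : Type*} [NormedAddCommGroup H] [InnerProductSpace ℂ H] [CompleteSpace H]

theorem IsSelfAdjoint.re_inner_apply_of_sub_I_smul_apply_eq {P M : H →L[ℂ] H}
    (hP : IsSelfAdjoint P) {u : H} {ω : ℂ} (hu : (P - Complex.I • M) u = ω • u) :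
    RCLike.re ⟪u, M u⟫_ℂ = -(ω.im * ‖u‖ ^ 2) := by
  have hpair : ⟪u, P u⟫_ℂ - Complex.I * ⟪u, M u⟫_ℂ = ω * ((‖u‖ ^ 2 : ℝ) : ℂ) := by
    simpa [inner_sub_right, inner_smul_right, inner_self_eq_norm_sq_to_K] using
      congrArg (⟪u, ·⟫_ℂ) hu
  have him := congrArg Complex.im hpair
  simp only [Complex.sub_im, Complex.mul_im, Complex.I_re, Complex.I_im, Complex.ofReal_re,
    Complex.ofReal_im] at him
  have hreal : (⟪u, P u⟫_ℂ).im = 0 := hP.isSymmetric.im_inner_self_apply u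
  rw [RCLike.re_to_complex]
  linarith

end Hilbert

namespace MeasureTheory.L2

variable {X : Type*} [MeasurableSpace X] {μ : Measure X}

theorem eq_zero_of_re_inner_eq_zero_of_ae_eq_mul {u v : Lp ℂ 2 μ} {ψ : X → ℝ}
    (hψ : ∀ᵐ x ∂μ, 0 ≤ ψ x) (hv : (v : X → ℂ) =ᵐ[μ] fun x => (ψ x : ℂ) * u x)
    (h : RCLike.re ⟪u, v⟫_ℂ = 0) : v = 0 := by
  have hpointwise : (fun x => RCLike.re ⟪u x, v x⟫_ℂ) =ᵐ[μ] fun x => ψ x * ‖u x‖ ^ 2 := by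
    filter_upwards [hv] with x hx
    rw [hx, RCLike.inner_apply, mul_assoc, RCLike.mul_conj]
    simp [← Complex.ofReal_pow]
  have hint : Integrable (fun x => RCLike.re ⟪u x, v x⟫_ℂ) μ := (integrable_inner u v).re
  have hzero : ∫ x, ψ x * ‖u x‖ ^ 2 ∂μ = 0 := by
    rw [← integral_congr_ae hpointwise, integral_re (integrable_inner u v), ← inner_def, h]
  have hae : ∀ᵐ x ∂μ, ψ x * ‖u x‖ ^ 2 = 0 := by
    refine (integral_eq_zero_iff_of_nonneg_ae ?_ (hint.congr hpointwise)).mp hzero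
    filter_upwards [hψ] with x hx using mul_nonneg hx (sq_nonneg _)
  rw [Lp.eq_zero_iff_ae_eq_zero]
  filter_upwards [hv, hae] with x hvx hx
  rcases mul_eq_zero.mp hx with hψx | hux
  · simp [hvx, hψx]
  · simp [hvx, norm_eq_zero.mp (pow_eq_zero_iff two_ne_zero |>.mp hux)]

end MeasureTheory.L2

theorem statement0_general {X : Type*} [MeasurableSpace X] (μ : Measure X)
    (χ : X → ℝ)
    (hχ_nonneg : ∀ x, 0 ≤ χ x)
    (P : Lp ℂ 2 μ →L[ℂ] Lp ℂ 2 μ) (hP : IsSelfAdjoint P)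
    (Mχ : Lp ℂ 2 μ →L[ℂ] Lp ℂ 2 μ)
    (hMχ : ∀ u : Lp ℂ 2 μ, (Mχ u : X → ℂ) =ᵐ[μ] fun x => (χ x : ℂ) * u x)
    (u : Lp ℂ 2 μ) (ω : ℂ) (hω : 0 ≤ ω.im)
    (hu : (P - Complex.I • Mχ) u = ω • u) :
    ((fun x => ((χ x : ℂ) + (ω.im : ℂ)) * u x) =ᵐ[μ] 0) ∧ P u = (ω.re : ℂ) • u := by
  have hre := hP.re_inner_apply_of_sub_I_smul_apply_eq hu
  set v := Mχ u + (ω.im : ℂ) • u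
  have hv : (v : X → ℂ) =ᵐ[μ] fun x => ((χ x + ω.im : ℝ) : ℂ) * u x := by
    filter_upwards [Lp.coeFn_add (Mχ u) ((ω.im : ℂ) • u), hMχ u, Lp.coeFn_smul (ω.im : ℂ) u]
      with x hadd hM hsmul
    rw [hadd, Pi.add_apply, hM, hsmul, Pi.smul_apply, smul_eq_mul]
    push_cast
    ring
  have hv0 : v = 0 := by
    refine L2.eq_zero_of_re_inner_eq_zero_of_ae_eq_mul
      (ae_of_all _ fun x => add_nonneg (hχ_nonneg x) hω) hv ?_
    rw [inner_add_right, inner_smul_right, inner_self_eq_norm_sq_to_K, map_add, hre]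
    simp [← Complex.ofReal_pow]
  refine ⟨?_, ?_⟩
  · rw [hv0] at hv
    simpa only [Complex.ofReal_add] using hv.symm.trans (Lp.coeFn_zero ℂ 2 μ)
  · have hM : Mχ u = -(ω.im : ℂ) • u := by
      rw [neg_smul]
      exact eq_neg_of_add_eq_zero_left hv0
    have hPu : P u - Complex.I • Mχ u = ω • u := hu
    rw [hM] at hPu
    linear_combination (norm := module) hPu - (Complex.re_add_im ω) • u

/-- Let `𝐏 := P - i Mχ` on `L²(μ; ℂ)`, where `P` is bounded self-adjoint,
`χ ≥ 0` is bounded measurable and `Mχ` is multiplication by `χ`. If `Im ω ≥ 0` and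
`𝐏 u = ω u`, then `(χ + Im ω) · u = 0` a.e. and `P u = (Re ω) u`. -/
theorem statement0 {X : Type*} [MeasurableSpace X] (μ : Measure X)
    (χ : X → ℝ) (hχ_meas : Measurable χ) (hχ_bdd : ∃ C : ℝ, ∀ x, |χ x| ≤ C)
    (hχ_nonneg : ∀ x, 0 ≤ χ x)
    (P : Lp ℂ 2 μ →L[ℂ] Lp ℂ 2 μ) (hP : IsSelfAdjoint P)
    (Mχ : Lp ℂ 2 μ →L[ℂ] Lp ℂ 2 μ)
    (hMχ : ∀ u : Lp ℂ 2 μ, (Mχ u : X → ℂ) =ᵐ[μ] fun x => (χ x : ℂ) * u x)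
    (u : Lp ℂ 2 μ) (ω : ℂ) (hω : 0 ≤ ω.im)
    (hu : (P - Complex.I • Mχ) u = ω • u) :
    ((fun x => ((χ x : ℂ) + (ω.im : ℂ)) * u x) =ᵐ[μ] 0) ∧ P u = (ω.re : ℂ) • u :=
  statement0_general μ χ hχ_nonneg P hP Mχ hMχ u ω hω hu
end

section
/- Let 𝐏 := P − i M_χ. If ω ∈ ℂ with Im ω ≥ 0 is an eigenvalue of 𝐏, i.e. there exists u ∈ L² with u ≠ 0 and 𝐏u = ωu, then Re ω is an eigenvalue of P (with the same eigenvector u). In other words, {Re ω : ω ∈ Spec_pp(𝐏), Im ω ≥ 0} ⊆ Spec_pp(P). -/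
/-!
Pairing the eigenvalue equation `P u - i χ u = ω u` with `u` gives
`⟪u, P u⟫ - i ∫ χ |u|² = ω ‖u‖²`. The first term is real because `P` is self-adjoint, so taking
imaginary parts yields `Im ω · ‖u‖² + ∫ χ |u|² = 0`, a sum of two nonnegative terms. Hence
`Im ω = 0` and `χ u = 0` almost everywhere, so the damping term vanishes and `P u = (Re ω) u`.
-/

open MeasureTheory

open scoped InnerProductSpace ComplexOrder

section MultiplicationOperator

variable {X 𝕜 : Type*} [MeasurableSpace X] {μ : Measure X} [RCLike 𝕜] {χ : X → ℝ}

theorem L2.inner_apply_ae_eq_of_ae_eq_mul {u v : Lp 𝕜 2 μ}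
    (hv : (v : X → 𝕜) =ᵐ[μ] fun x => (χ x : 𝕜) * u x) :
    (fun x => ⟪u x, v x⟫_𝕜) =ᵐ[μ] fun x => ((χ x * ‖u x‖ ^ 2 : ℝ) : 𝕜) := by
  filter_upwards [hv] with x hx
  rw [hx, ← smul_eq_mul, inner_smul_right, inner_self_eq_norm_sq_to_K]
  push_cast
  rfl

theorem L2.integrable_mul_norm_sq_of_ae_eq_mul {u v : Lp 𝕜 2 μ}
    (hv : (v : X → 𝕜) =ᵐ[μ] fun x => (χ x : 𝕜) * u x) :
    Integrable (fun x => χ x * ‖u x‖ ^ 2) μ := by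
  simpa using ((L2.integrable_inner u v).congr (inner_apply_ae_eq_of_ae_eq_mul hv)).re

theorem L2.inner_eq_integral_of_ae_eq_mul {u v : Lp 𝕜 2 μ}
    (hv : (v : X → 𝕜) =ᵐ[μ] fun x => (χ x : 𝕜) * u x) :
    ⟪u, v⟫_𝕜 = ((∫ x, χ x * ‖u x‖ ^ 2 ∂μ : ℝ) : 𝕜) := by
  rw [L2.inner_def, integral_congr_ae (inner_apply_ae_eq_of_ae_eq_mul hv), integral_ofReal]

theorem L2.eq_zero_of_inner_eq_zero_of_ae_eq_mul (hχ : ∀ x, 0 ≤ χ x) {u v : Lp 𝕜 2 μ}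
    (hv : (v : X → 𝕜) =ᵐ[μ] fun x => (χ x : 𝕜) * u x) (h : ⟪u, v⟫_𝕜 = 0) : v = 0 := by
  rw [L2.inner_eq_integral_of_ae_eq_mul hv, RCLike.ofReal_eq_zero,
    integral_eq_zero_iff_of_nonneg (fun x => by have := hχ x; positivity)
      (integrable_mul_norm_sq_of_ae_eq_mul hv)] at h
  refine Lp.ext ((hv.trans ?_).trans (Lp.coeFn_zero 𝕜 2 μ).symm)
  filter_upwards [h] with x hx
  simpa using hx

theorem L2.inner_nonneg_of_ae_eq_mul (hχ : ∀ x, 0 ≤ χ x) {u v : Lp 𝕜 2 μ}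
    (hv : (v : X → 𝕜) =ᵐ[μ] fun x => (χ x : 𝕜) * u x) : 0 ≤ ⟪u, v⟫_𝕜 := by
  rw [L2.inner_eq_integral_of_ae_eq_mul hv, RCLike.ofReal_nonneg]
  exact integral_nonneg fun x => by have := hχ x; positivity

end MultiplicationOperator

theorem im_eq_zero_and_inner_eq_zero_of_sub_I_smul_apply_eq_smul
    {E : Type*} [NormedAddCommGroup E] [InnerProductSpace ℂ E]
    {P M : E →L[ℂ] E} (hP : (P : E →ₗ[ℂ] E).IsSymmetric) {u : E} (hu : u ≠ 0)
    (hM : 0 ≤ ⟪u, M u⟫_ℂ) {ω : ℂ} (hω : 0 ≤ ω.im) (h : P u - Complex.I • M u = ω • u) :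
    ω.im = 0 ∧ ⟪u, M u⟫_ℂ = 0 := by
  obtain ⟨s, hs, hMs⟩ : ∃ s : ℝ, 0 ≤ s ∧ ⟪u, M u⟫_ℂ = s :=
    ⟨_, (Complex.nonneg_iff.mp hM).1, Complex.ext rfl (Complex.nonneg_iff.mp hM).2.symm⟩
  have hPu_real : (⟪u, P u⟫_ℂ).im = 0 :=
    Complex.conj_eq_iff_im.mp (by rw [inner_conj_symm]; exact hP u u)
  have hinner : ⟪u, P u⟫_ℂ - Complex.I * s = ω * (‖u‖ ^ 2 : ℝ) := by
    rw [← hMs, ← inner_smul_right, ← inner_sub_right, h, inner_smul_right,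
      inner_self_eq_norm_sq_to_K]
    norm_cast
  have him : ω.im * ‖u‖ ^ 2 + s = 0 := by
    have := congrArg Complex.im hinner
    simp only [Complex.sub_im, Complex.mul_im, Complex.ofReal_re, Complex.ofReal_im,
      Complex.I_re, Complex.I_im, hPu_real] at this
    linarith
  have hnorm : 0 < ‖u‖ ^ 2 := by positivity
  refine ⟨by nlinarith, ?_⟩
  rw [hMs]
  exact_mod_cast (by nlinarith : s = 0)

theorem statement1_general {X : Type*} [MeasurableSpace X] (μ : Measure X)
    (χ : X → ℝ)
    (hχ_nonneg : ∀ x, 0 ≤ χ x)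
    (P : Lp ℂ 2 μ →L[ℂ] Lp ℂ 2 μ) (hP : IsSelfAdjoint P)
    (Mχ : Lp ℂ 2 μ →L[ℂ] Lp ℂ 2 μ)
    (hMχ : ∀ u : Lp ℂ 2 μ, (Mχ u : X → ℂ) =ᵐ[μ] fun x => (χ x : ℂ) * u x)
    (ω : ℂ) (hω : 0 ≤ ω.im)
    (u : Lp ℂ 2 μ) (hu_ne : u ≠ 0)
    (hu : (P - Complex.I • Mχ) u = ω • u) :
    P u = (ω.re : ℂ) • u ∧ u ≠ 0 := by
  obtain ⟨hω_real, hMu⟩ := im_eq_zero_and_inner_eq_zero_of_sub_I_smul_apply_eq_smul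
    hP.isSymmetric hu_ne (L2.inner_nonneg_of_ae_eq_mul hχ_nonneg (hMχ u)) hω hu
  have hMu_zero : Mχ u = 0 := L2.eq_zero_of_inner_eq_zero_of_ae_eq_mul hχ_nonneg (hMχ u) hMu
  refine ⟨?_, hu_ne⟩
  rw [sub_apply, smul_apply, hMu_zero, smul_zero, sub_zero] at hu
  rw [hu]
  congr 1
  exact Complex.ext rfl (by simp [hω_real])

/-- Let `𝐏 := P - i Mχ` on `L²(μ; ℂ)`. If `ω` with `Im ω ≥ 0` is an
eigenvalue of `𝐏` with eigenvector `u ≠ 0`, then `Re ω` is an eigenvalue of `P`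
with the same eigenvector `u`. -/
theorem statement1 {X : Type*} [MeasurableSpace X] (μ : Measure X)
    (χ : X → ℝ) (hχ_meas : Measurable χ) (hχ_bdd : ∃ C : ℝ, ∀ x, |χ x| ≤ C)
    (hχ_nonneg : ∀ x, 0 ≤ χ x)
    (P : Lp ℂ 2 μ →L[ℂ] Lp ℂ 2 μ) (hP : IsSelfAdjoint P)
    (Mχ : Lp ℂ 2 μ →L[ℂ] Lp ℂ 2 μ)
    (hMχ : ∀ u : Lp ℂ 2 μ, (Mχ u : X → ℂ) =ᵐ[μ] fun x => (χ x : ℂ) * u x)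
    (ω : ℂ) (hω : 0 ≤ ω.im)
    (u : Lp ℂ 2 μ) (hu_ne : u ≠ 0)
    (hu : (P - Complex.I • Mχ) u = ω • u) :
    P u = (ω.re : ℂ) • u ∧ u ≠ 0 :=
  statement1_general μ χ hχ_nonneg P hP Mχ hMχ ω hω u hu_ne hu
end
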